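/- Let G be a finite simple graph and (a,b) an edge of G. If a and b have no common neighbor in G (S_{a,b} = ∅), or if S_{a,b} ≠ ∅ and k_min((a,b)) > φ_G((a,b)), then deleting (a,b) affects no other edge: for every edge e' ≠ (a,b) of G, φ_{G−(a,b)}(e') = φ_G(e'). -/
import Mathlib


open SimpleGraph

variable {V : Type*}

/-- `H` is a `k`-truss of `G`: a connected subgraph with at least one edge in which
every edge lies in at least `k - 2` triangles of `H` (i.e. the endpoints of every edge
have at least `k - 2` common neighbors in `H`). -/
def IsTruss (G : SimpleGraph V) (k : ℕ) (H : G.Subgraph) : Prop :=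
  H.Connected ∧ H.edgeSet.Nonempty ∧
    ∀ a b : V, H.Adj a b → k - 2 ≤ {c : V | H.Adj a c ∧ H.Adj b c}.ncard

/-- The truss number `φ_G(e)` of an edge `e`: the largest `k` such that `e` lies in some
`k`-truss of `G`. -/
noncomputable def trussNumber (G : SimpleGraph V) (e : Sym2 V) : ℕ :=
  sSup {k : ℕ | ∃ H : G.Subgraph, IsTruss G k H ∧ e ∈ H.edgeSet}

/-- The support of the edge `(a, b)` in a subgraph `H`: the number of triangles of `H`
containing it, i.e. the number of common neighbors of `a` and `b` in `H`. -/
noncomputable def suppIn {G : SimpleGraph V} (H : G.Subgraph) (a b : V) : ℕ :=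
  {c : V | H.Adj a c ∧ H.Adj b c}.ncard

/-- The support of the edge `(a, b)` in `G`. -/
noncomputable def suppG (G : SimpleGraph V) (a b : V) : ℕ :=
  {c : V | G.Adj a c ∧ G.Adj b c}.ncard

/-- `S_{a,b}`: the common neighbors of `a` and `b` in `G`. -/
def commonNbrs (G : SimpleGraph V) (a b : V) : Set V :=
  {c : V | G.Adj a c ∧ G.Adj b c}

/-- `E_{S_{a,b} ↔ {a,b}}`: the edges of `G` joining a common neighbor of `a` and `b`
to `a` or to `b`. -/
def sideEdges (G : SimpleGraph V) (a b : V) : Set (Sym2 V) :=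
  {e | ∃ c, G.Adj a c ∧ G.Adj b c ∧ (e = s(a, c) ∨ e = s(b, c))}

/-- `k_min((a,b))`: minimum truss number among the edges of `E_{S_{a,b} ↔ {a,b}}`. -/
noncomputable def kmin (G : SimpleGraph V) (a b : V) : ℕ :=
  sInf (trussNumber G '' sideEdges G a b)

/-- `k_max((a,b))`: maximum truss number among the edges of `E_{S_{a,b} ↔ {a,b}}`. -/
noncomputable def kmax (G : SimpleGraph V) (a b : V) : ℕ :=
  sSup (trussNumber G '' sideEdges G a b)

/-- `G + (a,b)`: the graph obtained from `G` by inserting the edge `(a, b)`. -/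
def insertEdge (G : SimpleGraph V) (a b : V) : SimpleGraph V :=
  G ⊔ fromEdgeSet {s(a, b)}

/-- transfer a subgraph to another ambient graph -/
def liftSub {G G' : SimpleGraph V} (H : G.Subgraph) (h : ∀ x y, H.Adj x y → G'.Adj x y) :
    G'.Subgraph where
  verts := H.verts
  Adj := H.Adj
  adj_sub := fun ha => h _ _ ha
  edge_vert := fun ha => H.edge_vert ha
  symm := H.symm

lemma isTruss_liftSub {G G' : SimpleGraph V} {k : ℕ} (H : G.Subgraph)
    (h : ∀ x y, H.Adj x y → G'.Adj x y) (hH : IsTruss G k H) :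
    IsTruss G' k (liftSub H h) := ⟨⟨hH.1.coe⟩, hH.2.1, hH.2.2⟩

lemma mem_edgeSet_liftSub {G G' : SimpleGraph V} (H : G.Subgraph)
    (h : ∀ x y, H.Adj x y → G'.Adj x y) {e : Sym2 V} (he : e ∈ H.edgeSet) :
    e ∈ (liftSub H h).edgeSet := he

lemma isTruss_mono {G : SimpleGraph V} {k j : ℕ} {H : G.Subgraph}
    (hH : IsTruss G k H) (hj : j ≤ k) : IsTruss G j H :=
  ⟨hH.1, hH.2.1, fun a b hab => le_trans (Nat.sub_le_sub_right hj 2) (hH.2.2 a b hab)⟩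

lemma trussSet_bddAbove [Fintype V] (G : SimpleGraph V) (e : Sym2 V) :
    BddAbove {k : ℕ | ∃ H : G.Subgraph, IsTruss G k H ∧ e ∈ H.edgeSet} := by
  refine ⟨Fintype.card V + 2, ?_⟩
  rintro k ⟨H, hH, he⟩
  induction e using Sym2.ind with
  | _ x y =>
    rw [Subgraph.mem_edgeSet] at he
    have h1 := hH.2.2 x y he
    have h2 : ({c : V | H.Adj x c ∧ H.Adj y c}).ncard ≤ Fintype.card V := by
      simpa [Set.ncard_univ] using Set.ncard_le_ncard (Set.subset_univ _) (Set.toFinite (Set.univ : Set V))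
    omega

lemma two_mem_trussSet {G : SimpleGraph V} {e : Sym2 V} (he : e ∈ G.edgeSet) :
    2 ∈ {k : ℕ | ∃ H : G.Subgraph, IsTruss G k H ∧ e ∈ H.edgeSet} := by
  induction e using Sym2.ind with
  | _ x y =>
    rw [mem_edgeSet] at he
    exact ⟨G.subgraphOfAdj he,
      ⟨Subgraph.subgraphOfAdj_connected he, ⟨s(x, y), by simp⟩, fun a b _ => by simp⟩, by simp⟩

lemma exists_truss [Fintype V] {G : SimpleGraph V} {e : Sym2 V} (he : e ∈ G.edgeSet) :
    ∃ H : G.Subgraph, IsTruss G (trussNumber G e) H ∧ e ∈ H.edgeSet :=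
  Nat.sSup_mem ⟨2, two_mem_trussSet he⟩ (trussSet_bddAbove G e)

lemma le_trussNumber [Fintype V] {G : SimpleGraph V} {k : ℕ} {e : Sym2 V} {H : G.Subgraph}
    (hH : IsTruss G k H) (he : e ∈ H.edgeSet) : k ≤ trussNumber G e :=
  le_csSup (trussSet_bddAbove G e) ⟨H, hH, he⟩

lemma two_le_trussNumber [Fintype V] {G : SimpleGraph V} {e : Sym2 V} (he : e ∈ G.edgeSet) :
    2 ≤ trussNumber G e :=
  le_csSup (trussSet_bddAbove G e) (two_mem_trussSet he)

lemma reach_transfer {G : SimpleGraph V} {H K : G.Subgraph} (hv : H.verts ⊆ K.verts)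
    (hadj : ∀ x y (hxy : H.Adj x y),
      K.coe.Reachable ⟨x, hv (H.edge_vert hxy)⟩ ⟨y, hv (H.edge_vert hxy.symm)⟩)
    {u v : H.verts} (h : H.coe.Reachable u v) :
    K.coe.Reachable ⟨u, hv u.2⟩ ⟨v, hv v.2⟩ := by
  obtain ⟨w⟩ := h
  induction w with
  | nil => exact Reachable.refl _
  | @cons x y z h p ih => exact (hadj _ _ h).trans ih

lemma side_truss [Fintype V] {G : SimpleGraph V} {a b : V} {k : ℕ}
    (hkm : trussNumber G s(a, b) < kmin G a b) (hk : k ≤ trussNumber G s(a, b)) :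
    ∀ e'' ∈ sideEdges G a b,
      ∃ T : G.Subgraph, IsTruss G k T ∧ e'' ∈ T.edgeSet ∧ s(a, b) ∉ T.edgeSet := by
  intro e'' he''
  have hmem : e'' ∈ G.edgeSet := by
    obtain ⟨c, hac, hbc, hor⟩ := he''
    rcases hor with rfl | rfl <;> rw [mem_edgeSet] <;> assumption
  have hle : kmin G a b ≤ trussNumber G e'' := Nat.sInf_le ⟨e'', he'', rfl⟩
  obtain ⟨T, hT, heT⟩ := exists_truss hmem
  refine ⟨T, isTruss_mono hT (by omega), heT, fun hcon => ?_⟩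
  have := le_trussNumber hT hcon
  omega

theorem stmt6 [Fintype V] (G : SimpleGraph V) (a b : V) (hab : G.Adj a b)
    (h : commonNbrs G a b = ∅ ∨
      (commonNbrs G a b ≠ ∅ ∧ trussNumber G s(a, b) < kmin G a b)) :
    ∀ e' ∈ G.edgeSet, e' ≠ s(a, b) →
      trussNumber (G.deleteEdges {s(a, b)}) e' = trussNumber G e' := by
  intro e' he' hne
  induction e' using Sym2.ind with
  | _ u v =>
    have he'd : s(u, v) ∈ (G.deleteEdges {s(a, b)}).edgeSet := by
      rw [edgeSet_deleteEdges]; exact ⟨he', by simpa using hne⟩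
    apply le_antisymm
    · refine csSup_le_csSup (trussSet_bddAbove G s(u, v)) ⟨2, two_mem_trussSet he'd⟩ ?_
      rintro k ⟨H, hH, he⟩
      exact ⟨liftSub H (fun x y hxy => (H.adj_sub hxy).1), isTruss_liftSub H _ hH,
        mem_edgeSet_liftSub H _ he⟩
    · obtain ⟨T0, hT0, he0⟩ := exists_truss he'
      set k := trussNumber G s(u, v) with hkdef
      by_cases hab0 : s(a, b) ∈ T0.edgeSet
      · by_cases hk2 : k ≤ 2
        · exact le_trans hk2 (two_le_trussNumber he'd)
        push_neg at hk2
        have habT : T0.Adj a b := Subgraph.mem_edgeSet.mp hab0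
        have hsupp0 := hT0.2.2 a b habT
        have hCNne : {c : V | T0.Adj a c ∧ T0.Adj b c}.Nonempty := by
          rcases Set.eq_empty_or_nonempty {c : V | T0.Adj a c ∧ T0.Adj b c} with hemp | hne2
          · rw [hemp, Set.ncard_empty] at hsupp0; omega
          · exact hne2
        obtain ⟨c0, hc0a, hc0b⟩ := hCNne
        rcases h with hemp | ⟨-, hkm⟩
        · exact absurd hemp (Set.nonempty_iff_ne_empty.mp
            ⟨c0, T0.adj_sub hc0a, T0.adj_sub hc0b⟩)
        have ht : k ≤ trussNumber G s(a, b) := le_trussNumber hT0 hab0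
        choose T hT1 hT2 hT3 using side_truss hkm ht
        set D := T0.deleteEdges {s(a, b)} with hD
        set K := D ⊔ ⨆ (e'' : Sym2 V) (h'' : e'' ∈ sideEdges G a b), T e'' h'' with hKdef
        have hDadj : ∀ x y, D.Adj x y ↔ T0.Adj x y ∧ s(x, y) ≠ s(a, b) := by
          intro x y; rw [hD, Subgraph.deleteEdges_adj]; simp
        have hKadj : ∀ x y, K.Adj x y ↔
            D.Adj x y ∨ ∃ (e'' : Sym2 V) (h'' : e'' ∈ sideEdges G a b), (T e'' h'').Adj x y := by
          intro x y; rw [hKdef, Subgraph.sup_adj]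
          simp [Subgraph.iSup_adj]
        have hTle : ∀ e'' (h'' : e'' ∈ sideEdges G a b), T e'' h'' ≤ K := by
          intro e'' h''
          exact le_trans (le_iSup₂ (f := fun e'' h'' => T e'' h'') e'' h'') le_sup_right
        have hKab : ∀ x y, K.Adj x y → s(x, y) ≠ s(a, b) := by
          intro x y hxy hcon
          rw [hKadj] at hxy
          rcases hxy with hxy | ⟨e'', h'', hxy⟩
          · exact ((hDadj x y).mp hxy).2 hcon
          · apply hT3 e'' h''
            rw [Sym2.eq_iff] at hcon
            rcases hcon with ⟨rfl, rfl⟩ | ⟨rfl, rfl⟩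
            · exact hxy
            · exact hxy.symm
        have hc0b' : c0 ≠ a := (T0.adj_sub hc0a).ne'
        have hc0a' : c0 ≠ b := (T0.adj_sub hc0b).ne'
        have hDac0 : D.Adj a c0 := (hDadj a c0).mpr ⟨hc0a, by
          rw [Ne, Sym2.eq_iff]; push_neg
          exact ⟨fun _ => hc0a', fun h1 => absurd h1 hab.ne⟩⟩
        have hDbc0 : D.Adj b c0 := (hDadj b c0).mpr ⟨hc0b, by
          rw [Ne, Sym2.eq_iff]; push_neg
          exact ⟨fun h1 => absurd h1 hab.ne', fun _ => hc0b'⟩⟩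
        have hDle : D ≤ K := le_sup_left
        have hDverts : D.verts = T0.verts := Subgraph.deleteEdges_verts _
        have hT0sub : T0.verts ⊆ K.verts := by
          rw [hKdef, Subgraph.verts_sup]; exact fun v hv => Or.inl (hDverts ▸ hv)
        have haK : a ∈ K.verts := hT0sub (T0.edge_vert habT)
        have hbK : b ∈ K.verts := hT0sub (T0.edge_vert habT.symm)
        have hc0K : c0 ∈ K.verts := hT0sub (T0.edge_vert hc0a.symm)
        -- reach from b to a inside K
        have hba : K.coe.Reachable ⟨b, hbK⟩ ⟨a, haK⟩ :=
          ((hDle.2 hDbc0).coe.reachable).trans ((hDle.2 hDac0).coe.symm.reachable)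
        have hreachT0 : ∀ x y (hxy : T0.Adj x y),
            K.coe.Reachable ⟨x, hT0sub (T0.edge_vert hxy)⟩ ⟨y, hT0sub (T0.edge_vert hxy.symm)⟩ := by
          intro x y hxy
          by_cases hc : s(x, y) = s(a, b)
          · rw [Sym2.eq_iff] at hc
            rcases hc with ⟨rfl, rfl⟩ | ⟨rfl, rfl⟩
            · exact hba.symm
            · exact hba
          · exact ((hDle.2 ((hDadj x y).mpr ⟨hxy, hc⟩)).coe).reachable
        have hreach : ∀ v (hv : v ∈ K.verts), K.coe.Reachable ⟨v, hv⟩ ⟨a, haK⟩ := by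
          intro v hv
          have hv' := hv
          rw [hKdef, Subgraph.verts_sup, Set.mem_union] at hv'
          rcases hv' with hvD | hvT
          · have hvT0 : v ∈ T0.verts := hDverts ▸ hvD
            have hr : T0.coe.Reachable ⟨v, hvT0⟩ ⟨a, T0.edge_vert habT⟩ :=
              hT0.1.coe ⟨v, hvT0⟩ ⟨a, T0.edge_vert habT⟩
            exact reach_transfer hT0sub hreachT0 hr
          · rw [Subgraph.verts_iSup] at hvT
            simp only [Set.mem_iUnion] at hvT
            obtain ⟨e'', hvT⟩ := hvT
            rw [Subgraph.verts_iSup] at hvT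
            simp only [Set.mem_iUnion] at hvT
            obtain ⟨h'', hvmem⟩ := hvT
            obtain ⟨c, hac, hbc, hor⟩ := id h''
            have hrmap : ∀ (w : V) (hw : w ∈ (T e'' h'').verts) (hwK : w ∈ K.verts),
                K.coe.Reachable ⟨v, hv⟩ ⟨w, hwK⟩ := by
              intro w hw hwK
              have hr : (T e'' h'').coe.Reachable ⟨v, hvmem⟩ ⟨w, hw⟩ :=
                (hT1 e'' h'').1.coe ⟨v, hvmem⟩ ⟨w, hw⟩
              exact (hr.map (Subgraph.inclusion (hTle e'' h'')))
            rcases hor with rfl | rfl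
            · have hTadj : (T _ h'').Adj a c := Subgraph.mem_edgeSet.mp (hT2 _ h'')
              exact hrmap a ((T _ h'').edge_vert hTadj) haK
            · have hTadj : (T _ h'').Adj b c := Subgraph.mem_edgeSet.mp (hT2 _ h'')
              exact (hrmap b ((T _ h'').edge_vert hTadj) hbK).trans hba
        have hKconn : K.Connected := by
          rw [Subgraph.connected_iff]
          exact ⟨⟨fun u v => (hreach u u.2).trans (hreach v v.2).symm⟩, ⟨a, haK⟩⟩
        -- support
        have hsupp : ∀ x y, K.Adj x y → k - 2 ≤ {c : V | K.Adj x c ∧ K.Adj y c}.ncard := by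
          intro x y hxy
          have hmono : ∀ (H' : G.Subgraph), H' ≤ K →
              {c : V | H'.Adj x c ∧ H'.Adj y c}.ncard ≤ {c : V | K.Adj x c ∧ K.Adj y c}.ncard := by
            intro H' hle
            exact Set.ncard_le_ncard (fun c hc => ⟨hle.2 hc.1, hle.2 hc.2⟩) (Set.toFinite _)
          rw [hKadj] at hxy
          rcases hxy with hxy | ⟨e'', h'', hxy⟩
          · obtain ⟨hT0xy, hnexy⟩ := (hDadj x y).mp hxy
            by_cases hside : s(x, y) ∈ sideEdges G a b
            · have hTadj : (T _ hside).Adj x y := Subgraph.mem_edgeSet.mp (hT2 _ hside)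
              exact le_trans ((hT1 _ hside).2.2 x y hTadj) (hmono _ (hTle _ hside))
            · have hsub : {c : V | T0.Adj x c ∧ T0.Adj y c} ⊆ {c : V | K.Adj x c ∧ K.Adj y c} := by
                rintro c ⟨hxc, hyc⟩
                have h1 : s(x, c) ≠ s(a, b) := by
                  intro hcon
                  rw [Sym2.eq_iff] at hcon
                  rcases hcon with ⟨rfl, rfl⟩ | ⟨rfl, rfl⟩
                  · exact hside ⟨y, T0.adj_sub hT0xy, T0.adj_sub hyc.symm, Or.inl rfl⟩
                  · exact hside ⟨y, T0.adj_sub hyc.symm, T0.adj_sub hT0xy, Or.inr rfl⟩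
                have h2 : s(y, c) ≠ s(a, b) := by
                  intro hcon
                  rw [Sym2.eq_iff] at hcon
                  rcases hcon with ⟨rfl, rfl⟩ | ⟨rfl, rfl⟩
                  · exact hside ⟨x, T0.adj_sub hT0xy.symm, T0.adj_sub hxc.symm, Or.inl Sym2.eq_swap⟩
                  · exact hside ⟨x, T0.adj_sub hxc.symm, T0.adj_sub hT0xy.symm, Or.inr Sym2.eq_swap⟩
                exact ⟨hDle.2 ((hDadj x c).mpr ⟨hxc, h1⟩), hDle.2 ((hDadj y c).mpr ⟨hyc, h2⟩)⟩
              exact le_trans (hT0.2.2 x y hT0xy) (Set.ncard_le_ncard hsub (Set.toFinite _))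
          · exact le_trans ((hT1 e'' h'').2.2 x y hxy) (hmono _ (hTle e'' h''))
        -- s(u, v) in K
        have he'K : s(u, v) ∈ K.edgeSet :=
          Subgraph.edgeSet_mono hDle
            ((hDadj u v).mpr ⟨Subgraph.mem_edgeSet.mp he0, hne⟩)
        -- lift to deleted graph
        have hKadj' : ∀ x y, K.Adj x y → (G.deleteEdges {s(a, b)}).Adj x y := by
          intro x y hxy
          rw [SimpleGraph.deleteEdges_adj]
          exact ⟨K.adj_sub hxy, by simpa using hKab x y hxy⟩
        exact le_trussNumber (G := G.deleteEdges {s(a, b)})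
          (H := liftSub K hKadj') ⟨⟨hKconn.coe⟩, ⟨s(u, v), he'K⟩, hsupp⟩ he'K
      · have hlift : ∀ x y, T0.Adj x y → (G.deleteEdges {s(a, b)}).Adj x y := by
          intro x y hxy
          rw [SimpleGraph.deleteEdges_adj]
          refine ⟨T0.adj_sub hxy, ?_⟩
          simp only [Set.mem_singleton_iff]
          intro hcon
          exact hab0 (hcon ▸ Subgraph.mem_edgeSet.mpr hxy)
        exact le_trussNumber (G := G.deleteEdges {s(a, b)})
          (H := liftSub T0 hlift) (isTruss_liftSub T0 _ hT0) he0
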